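/- arXiv:math/0608532 — 2 statements merged into one kernel-verified Lean document; each statement's English description precedes it below -/
import Mathlib

section
/- Define the grading D = span(L₁,L₂), D₁ = span(L₃), and D_k = [D, D_{k−1}] ∖ D_{k−1} for the distribution generated by the Kirillov operators on M_n. Then for n odd the Hausdorff complex dimension Σ_{k≥0}(k+1)·dim_ℂ D_k equals (n/2 + 1)² − 9/4, and for n even it equals (n/2 + 1)² − 2. -/
/-- The level of the Kirillov field `L_j` in the grading `D ⊕ D₁ ⊕ D₂ ⊕ …`:
`L₁, L₂` span `D` (level 0), `L₃` spans `D₁`, and `D_k = span(L_{2k}, L_{2k+1})` for `k ≥ 2`,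
i.e. `L_j` has level `⌊j/2⌋` for `j ≥ 3`. -/
def levelOf (j : ℕ) : ℕ := if j ≤ 2 then 0 else j / 2

/-- The complex dimension of the `k`-th layer `D_k` of the grading on `M_n`. -/
def dimLayer (n k : ℕ) : ℕ := ((Finset.Icc 1 n).filter (fun j => levelOf j = k)).card

lemma sum_levels (n : ℕ) :
    (∑ k ∈ Finset.range (n / 2 + 1), ((k : ℚ) + 1) * (dimLayer n k : ℚ)) =
      ∑ j ∈ Finset.Icc 1 n, ((levelOf j : ℚ) + 1) := by
  have hmaps : ∀ j ∈ Finset.Icc 1 n, levelOf j ∈ Finset.range (n / 2 + 1) := by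
    intro j hj
    simp only [Finset.mem_Icc] at hj
    simp only [Finset.mem_range, levelOf]
    split <;> omega
  rw [← Finset.sum_fiberwise_of_maps_to hmaps (fun j => ((levelOf j : ℚ) + 1))]
  apply Finset.sum_congr rfl
  intro k _
  rw [Finset.sum_congr rfl (fun j hj => by
    simp only [Finset.mem_filter] at hj
    rw [hj.2]), Finset.sum_const, dimLayer]
  ring

lemma sum_closed (n : ℕ) (hn : 3 ≤ n) :
    (∑ j ∈ Finset.Icc 1 n, ((levelOf j : ℚ) + 1)) =
      if Odd n then ((n : ℚ) / 2 + 1) ^ 2 - 9 / 4 else ((n : ℚ) / 2 + 1) ^ 2 - 2 := by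
  induction n, hn using Nat.le_induction with
  | base =>
    norm_num [show Finset.Icc 1 3 = {1, 2, 3} from rfl, levelOf]
  | succ n hn ih =>
    rw [Finset.sum_Icc_succ_top (by omega : 1 ≤ n + 1), ih]
    rcases Nat.even_or_odd n with ⟨m, hm⟩ | ⟨m, hm⟩
    · subst hm
      have h1 : ¬ Odd (m + m) := by simp [Nat.even_add]
      have h2 : Odd (m + m + 1) := by simp [Nat.even_add, parity_simps]
      have hl : levelOf (m + m + 1) = m := by
        unfold levelOf; split <;> omega
      rw [if_neg h1, if_pos h2, hl]
      push_cast
      ring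
    · subst hm
      have h1 : Odd (2 * m + 1) := ⟨m, rfl⟩
      have h2 : ¬ Odd (2 * m + 1 + 1) := by simp [Nat.even_add, parity_simps]
      have hl : levelOf (2 * m + 1 + 1) = m + 1 := by
        unfold levelOf; split <;> omega
      rw [if_pos h1, if_neg h2, hl]
      push_cast
      ring

/-- Mitchell's formula for the Hausdorff (complex) dimension of the sub-Riemannian
manifold `M_n`: `Σ_k (k+1) dim_ℂ D_k` equals `(n/2+1)² - 9/4` for odd `n` and
`(n/2+1)² - 2` for even `n`. -/
theorem hausdorff_dimension (n : ℕ) (hn : 3 ≤ n) :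
    (∑ k ∈ Finset.range (n / 2 + 1), ((k : ℚ) + 1) * (dimLayer n k : ℚ)) =
      if Odd n then ((n : ℚ) / 2 + 1) ^ 2 - 9 / 4 else ((n : ℚ) / 2 + 1) ^ 2 - 2 := by
  rw [sum_levels, sum_closed n hn]
end

section
/- Along any solution of the Hamiltonian system (as in the previous context), with l₃ = ξ̄₃ + 2c₁ ξ̄₄ + … + (n−2)c_{n−3} ξ̄_n, one has the derivative identities l̇₁ = l̄₂ l₃ and l̇₂ = −l̄₁ l₃. -/
open Finset

/-- `l₁ = Σ_{k=1}^n k c_{k-1} ξ̄_k` (with the convention `c₀ = 1`). -/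
noncomputable def lOne (n : ℕ) (c ξ : ℝ → ℕ → ℂ) (t : ℝ) : ℂ :=
  ∑ k ∈ Finset.Icc 1 n, (k : ℂ) * (if k = 1 then 1 else c t (k - 1)) * (starRingEnd ℂ) (ξ t k)

/-- `l₂ = Σ_{k=2}^n (k-1) c_{k-2} ξ̄_k` (with the convention `c₀ = 1`). -/
noncomputable def lTwo (n : ℕ) (c ξ : ℝ → ℕ → ℂ) (t : ℝ) : ℂ :=
  ∑ k ∈ Finset.Icc 2 n, ((k : ℂ) - 1) * (if k = 2 then 1 else c t (k - 2)) *
    (starRingEnd ℂ) (ξ t k)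

/-- `l₃ = Σ_{k=3}^n (k-2) c_{k-3} ξ̄_k` (with the convention `c₀ = 1`). -/
noncomputable def lThree (n : ℕ) (c ξ : ℝ → ℕ → ℂ) (t : ℝ) : ℂ :=
  ∑ k ∈ Finset.Icc 3 n, ((k : ℂ) - 2) * (if k = 3 then 1 else c t (k - 3)) *
    (starRingEnd ℂ) (ξ t k)

private lemma sum_shift (g : ℕ → ℂ) (a n : ℕ) :
    ∑ j ∈ Finset.Icc (a + 1) (n + 1), g j = ∑ k ∈ Finset.Icc a n, g (k + 1) := by
  rw [← Finset.map_add_right_Icc, Finset.sum_map]; rfl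

private lemma sum_top (g : ℕ → ℂ) (a n : ℕ) (h : a ≤ n + 1) :
    ∑ j ∈ Finset.Icc a (n + 1), g j = (∑ j ∈ Finset.Icc a n, g j) + g (n + 1) := by
  rw [← Finset.insert_Icc_right_eq_Icc_add_one h, Finset.sum_insert (by simp)]
  ring

private lemma sum_bot (g : ℕ → ℂ) (a n : ℕ) (h : a ≤ n) :
    ∑ j ∈ Finset.Icc a n, g j = g a + ∑ j ∈ Finset.Icc (a + 1) n, g j := by
  rw [← Finset.insert_Icc_add_one_left_eq_Icc h, Finset.sum_insert (by simp)]

private lemma sum_shift_strip1 (n a : ℕ) (ha : a + 1 ≤ n + 1) (f : ℕ → ℂ)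
    (hf : f (n + 1) = 0) :
    ∑ k ∈ Finset.Icc a n, f (k + 1) = ∑ j ∈ Finset.Icc (a + 1) n, f j := by
  rw [← sum_shift f a n, sum_top f (a + 1) n ha, hf, add_zero]

private lemma sum_shift_strip2 (n a : ℕ) (ha : a + 2 ≤ n + 1) (f : ℕ → ℂ)
    (hf1 : f (n + 1) = 0) (hf2 : f (n + 2) = 0) :
    ∑ k ∈ Finset.Icc a n, f (k + 2) = ∑ j ∈ Finset.Icc (a + 2) n, f j := by
  have h1 : ∑ k ∈ Finset.Icc a n, f (k + 2) = ∑ j ∈ Finset.Icc (a + 1) (n + 1), f (j + 1) :=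
    (sum_shift (fun j : ℕ => f (j + 1)) a n).symm
  rw [h1, ← sum_shift f (a + 1) (n + 1)]
  rw [show n + 1 + 1 = (n + 1) + 1 from rfl, sum_top f (a + 2) (n + 1) (by omega), hf2,
    add_zero, sum_top f (a + 2) n ha, hf1, add_zero]

noncomputable def bb (c : ℝ → ℕ → ℂ) (t : ℝ) (m : ℕ) : ℂ := if m = 0 then 1 else c t m

noncomputable def eta (n : ℕ) (ξ : ℝ → ℕ → ℂ) (t : ℝ) (m : ℕ) : ℂ :=
  if m ≤ n then ξ t m else 0

private lemma lOne_eq (n : ℕ) (c ξ : ℝ → ℕ → ℂ) (t : ℝ) :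
    lOne n c ξ t = ∑ k ∈ Finset.Icc 1 n, (k : ℂ) * bb c t (k - 1) * (starRingEnd ℂ) (ξ t k) := by
  refine Finset.sum_congr rfl fun k hk => ?_
  simp only [Finset.mem_Icc] at hk
  rcases eq_or_ne k 1 with h | h
  · simp [h, bb]
  · have h0 : k - 1 ≠ 0 := by omega
    simp [h, bb, h0]

private lemma lTwo_eq (n : ℕ) (c ξ : ℝ → ℕ → ℂ) (t : ℝ) :
    lTwo n c ξ t = ∑ k ∈ Finset.Icc 2 n,
      ((k : ℂ) - 1) * bb c t (k - 2) * (starRingEnd ℂ) (ξ t k) := by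
  refine Finset.sum_congr rfl fun k hk => ?_
  simp only [Finset.mem_Icc] at hk
  rcases eq_or_ne k 2 with h | h
  · simp [h, bb]
  · have h0 : k - 2 ≠ 0 := by omega
    simp [h, bb, h0]

private lemma lThree_eq (n : ℕ) (c ξ : ℝ → ℕ → ℂ) (t : ℝ) :
    lThree n c ξ t = ∑ k ∈ Finset.Icc 3 n,
      ((k : ℂ) - 2) * bb c t (k - 3) * (starRingEnd ℂ) (ξ t k) := by
  refine Finset.sum_congr rfl fun k hk => ?_
  simp only [Finset.mem_Icc] at hk
  rcases eq_or_ne k 3 with h | h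
  · simp [h, bb]
  · have h0 : k - 3 ≠ 0 := by omega
    simp [h, bb, h0]

private lemma deriv_lOne (n : ℕ) (c ξ : ℝ → ℕ → ℂ)
    (hc : ∀ k, Differentiable ℝ (fun t => c t k))
    (hξ : ∀ k, Differentiable ℝ (fun t => ξ t k)) (t : ℝ) :
    deriv (lOne n c ξ) t = ∑ k ∈ Finset.Icc 1 n,
      ((k : ℂ) * (if k = 1 then 0 else deriv (fun s => c s (k - 1)) t) * (starRingEnd ℂ) (ξ t k)
        + (k : ℂ) * (if k = 1 then 1 else c t (k - 1)) *
          (starRingEnd ℂ) (deriv (fun s => ξ s k) t)) := by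
  have h : HasDerivAt (lOne n c ξ) (∑ k ∈ Finset.Icc 1 n,
      ((k : ℂ) * (if k = 1 then 0 else deriv (fun s => c s (k - 1)) t) * (starRingEnd ℂ) (ξ t k)
        + (k : ℂ) * (if k = 1 then 1 else c t (k - 1)) *
          (starRingEnd ℂ) (deriv (fun s => ξ s k) t))) t := by
    have he : lOne n c ξ = fun s => ∑ k ∈ Finset.Icc 1 n,
        (k : ℂ) * (if k = 1 then 1 else c s (k - 1)) * (starRingEnd ℂ) (ξ s k) := rfl
    rw [he]
    refine HasDerivAt.fun_sum fun k _ => ?_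
    have hcf : HasDerivAt (fun s => (if k = 1 then (1 : ℂ) else c s (k - 1)))
        (if k = 1 then 0 else deriv (fun s => c s (k - 1)) t) t := by
      by_cases h : k = 1
      · simpa [h] using hasDerivAt_const t (1 : ℂ)
      · simpa [h] using ((hc (k - 1)) t).hasDerivAt
    have hxf : HasDerivAt (fun s => (starRingEnd ℂ) (ξ s k))
        ((starRingEnd ℂ) (deriv (fun s => ξ s k) t)) t := by
      simp only [starRingEnd_apply]
      exact ((hξ k) t).hasDerivAt.star
    have := (hcf.const_mul ((k : ℂ))).fun_mul hxf
    convert this using 1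
  rw [h.deriv]

private lemma deriv_lTwo (n : ℕ) (c ξ : ℝ → ℕ → ℂ)
    (hc : ∀ k, Differentiable ℝ (fun t => c t k))
    (hξ : ∀ k, Differentiable ℝ (fun t => ξ t k)) (t : ℝ) :
    deriv (lTwo n c ξ) t = ∑ k ∈ Finset.Icc 2 n,
      (((k : ℂ) - 1) * (if k = 2 then 0 else deriv (fun s => c s (k - 2)) t)
          * (starRingEnd ℂ) (ξ t k)
        + ((k : ℂ) - 1) * (if k = 2 then 1 else c t (k - 2)) *
          (starRingEnd ℂ) (deriv (fun s => ξ s k) t)) := by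
  have h : HasDerivAt (lTwo n c ξ) (∑ k ∈ Finset.Icc 2 n,
      (((k : ℂ) - 1) * (if k = 2 then 0 else deriv (fun s => c s (k - 2)) t)
          * (starRingEnd ℂ) (ξ t k)
        + ((k : ℂ) - 1) * (if k = 2 then 1 else c t (k - 2)) *
          (starRingEnd ℂ) (deriv (fun s => ξ s k) t))) t := by
    have he : lTwo n c ξ = fun s => ∑ k ∈ Finset.Icc 2 n,
        ((k : ℂ) - 1) * (if k = 2 then 1 else c s (k - 2)) * (starRingEnd ℂ) (ξ s k) := rfl
    rw [he]
    refine HasDerivAt.fun_sum fun k _ => ?_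
    have hcf : HasDerivAt (fun s => (if k = 2 then (1 : ℂ) else c s (k - 2)))
        (if k = 2 then 0 else deriv (fun s => c s (k - 2)) t) t := by
      by_cases h : k = 2
      · simpa [h] using hasDerivAt_const t (1 : ℂ)
      · simpa [h] using ((hc (k - 2)) t).hasDerivAt
    have hxf : HasDerivAt (fun s => (starRingEnd ℂ) (ξ s k))
        ((starRingEnd ℂ) (deriv (fun s => ξ s k) t)) t := by
      simp only [starRingEnd_apply]
      exact ((hξ k) t).hasDerivAt.star
    have := (hcf.const_mul ((k : ℂ) - 1)).fun_mul hxf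
    convert this using 1
  rw [h.deriv]

/-- Along any solution of the sub-Riemannian Hamiltonian system one has
`l̇₁ = l̄₂ l₃` and `l̇₂ = -l̄₁ l₃`. -/
theorem lOne_lTwo_derivative (n : ℕ) (hn : 3 ≤ n) (c ξ : ℝ → ℕ → ℂ)
    (hc : ∀ k, Differentiable ℝ (fun t => c t k))
    (hξ : ∀ k, Differentiable ℝ (fun t => ξ t k))
    (h1 : ∀ t, deriv (fun s => c s 1) t = (starRingEnd ℂ) (lOne n c ξ t))
    (h2 : ∀ t, deriv (fun s => c s 2) t =
      2 * c t 1 * (starRingEnd ℂ) (lOne n c ξ t) + (starRingEnd ℂ) (lTwo n c ξ t))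
    (h3 : ∀ t, ∀ k, 3 ≤ k → k ≤ n → deriv (fun s => c s k) t =
      (k : ℂ) * c t (k - 1) * (starRingEnd ℂ) (lOne n c ξ t) +
        ((k : ℂ) - 1) * c t (k - 2) * (starRingEnd ℂ) (lTwo n c ξ t))
    (h4 : ∀ t, ∀ k, 1 ≤ k → k ≤ n - 2 → deriv (fun s => ξ s k) t =
      -((k : ℂ) + 1) * ξ t (k + 1) * lOne n c ξ t - ((k : ℂ) + 1) * ξ t (k + 2) * lTwo n c ξ t)
    (h5 : ∀ t, deriv (fun s => ξ s (n - 1)) t = -(n : ℂ) * ξ t n * lOne n c ξ t)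
    (h6 : ∀ t, deriv (fun s => ξ s n) t = 0) :
    ∀ t, deriv (lOne n c ξ) t = (starRingEnd ℂ) (lTwo n c ξ t) * lThree n c ξ t ∧
      deriv (lTwo n c ξ) t = -(starRingEnd ℂ) (lOne n c ξ t) * lThree n c ξ t := by
  intro t
  -- abbreviations
  set K : ℂ →+* ℂ := starRingEnd ℂ with hK
  set L1 : ℂ := lOne n c ξ t with hL1
  set L2 : ℂ := lTwo n c ξ t with hL2
  set L3 : ℂ := lThree n c ξ t with hL3
  set B : ℕ → ℂ := bb c t with hB
  set E : ℕ → ℂ := eta n ξ t with hE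
  have hEval : ∀ m, m ≤ n → E m = ξ t m := fun m hm => if_pos hm
  have hEzero : ∀ m, n < m → E m = 0 := fun m hm => if_neg (by omega)
  -- uniform derivative of the coefficients
  have hDc : ∀ j, 1 ≤ j → j ≤ n → deriv (fun s => c s j) t =
      (j : ℂ) * B (j - 1) * K L1 + ((j : ℂ) - 1) * B (j - 2) * K L2 := by
    intro j hj1 hjn
    have hcase : j = 1 ∨ j = 2 ∨ 3 ≤ j := by omega
    rcases hcase with h | h | h
    · subst h
      rw [h1 t]
      simp [hB, bb, hL1]
    · subst h
      rw [h2 t]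
      simp [hB, bb]
      ring
    · rw [h3 t j h hjn]
      have e1 : B (j - 1) = c t (j - 1) := by
        simp [hB, bb, show j - 1 ≠ 0 by omega]
      have e2 : B (j - 2) = c t (j - 2) := by
        simp [hB, bb, show j - 2 ≠ 0 by omega]
      rw [e1, e2]
  -- uniform derivative of the momenta
  have hDξ : ∀ k, 1 ≤ k → k ≤ n → deriv (fun s => ξ s k) t =
      -((k : ℂ) + 1) * E (k + 1) * L1 - ((k : ℂ) + 1) * E (k + 2) * L2 := by
    intro k hk1 hkn
    have hcase : k ≤ n - 2 ∨ k = n - 1 ∨ k = n := by omega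
    rcases hcase with h | h | h
    · rw [h4 t k hk1 h]
      rw [hEval (k + 1) (by omega), hEval (k + 2) (by omega)]
    · subst h
      rw [h5 t]
      have e1 : n - 1 + 1 = n := by omega
      have e2 : n - 1 + 2 = n + 1 := by omega
      rw [e1, e2, hEval n le_rfl, hEzero (n + 1) (by omega)]
      have ec : ((n - 1 : ℕ) : ℂ) = (n : ℂ) - 1 := by
        rw [Nat.cast_sub (by omega)]; norm_num
      rw [ec]
      ring
    · rw [h, h6 t, hEzero (n + 1) (by omega), hEzero (n + 2) (by omega)]
      ring
  ---------------------------------------------------------------------------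
  -- part 1 : derivative of l₁
  ---------------------------------------------------------------------------
  have goal1 : deriv (lOne n c ξ) t = K L2 * L3 := by
    rw [deriv_lOne n c ξ hc hξ t, Finset.sum_add_distrib]
    -- the "coefficient" part
    have hA : (∑ k ∈ Finset.Icc 1 n,
        (k : ℂ) * (if k = 1 then 0 else deriv (fun s => c s (k - 1)) t) * K (ξ t k))
        = K L1 * (∑ k ∈ Finset.Icc 2 n, (k : ℂ) * ((k : ℂ) - 1) * B (k - 2) * K (ξ t k))
          + K L2 * (∑ k ∈ Finset.Icc 2 n, (k : ℂ) * ((k : ℂ) - 2) * B (k - 3) * K (ξ t k)) := by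
      rw [sum_bot _ 1 n (by omega)]
      have h1t : ((1 : ℕ) : ℂ) * (if (1 : ℕ) = 1 then 0 else deriv (fun s => c s (1 - 1)) t)
          * K (ξ t 1) = 0 := by simp
      rw [h1t, zero_add]
      rw [show (1 : ℕ) + 1 = 2 from rfl]
      have key : ∀ k ∈ Finset.Icc 2 n,
          (k : ℂ) * (if k = 1 then 0 else deriv (fun s => c s (k - 1)) t) * K (ξ t k)
          = K L1 * ((k : ℂ) * ((k : ℂ) - 1) * B (k - 2) * K (ξ t k))
            + K L2 * ((k : ℂ) * ((k : ℂ) - 2) * B (k - 3) * K (ξ t k)) := by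
        intro k hk
        simp only [Finset.mem_Icc] at hk
        rw [if_neg (by omega), hDc (k - 1) (by omega) (by omega)]
        have ec : ((k - 1 : ℕ) : ℂ) = (k : ℂ) - 1 := by
          rw [Nat.cast_sub (by omega)]; norm_num
        have i1 : k - 1 - 1 = k - 2 := by omega
        have i2 : k - 1 - 2 = k - 3 := by omega
        rw [ec, i1, i2]
        ring
      rw [Finset.sum_congr rfl key, Finset.sum_add_distrib, ← Finset.mul_sum, ← Finset.mul_sum]
    -- the "momentum" part
    have hBpart : (∑ k ∈ Finset.Icc 1 n,
        (k : ℂ) * (if k = 1 then 1 else c t (k - 1)) * K (deriv (fun s => ξ s k) t))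
        = -(K L1 * (∑ k ∈ Finset.Icc 1 n, (k : ℂ) * ((k : ℂ) + 1) * B (k - 1) * K (E (k + 1))))
          - K L2 * (∑ k ∈ Finset.Icc 1 n, (k : ℂ) * ((k : ℂ) + 1) * B (k - 1) * K (E (k + 2))) := by
      have key : ∀ k ∈ Finset.Icc 1 n,
          (k : ℂ) * (if k = 1 then 1 else c t (k - 1)) * K (deriv (fun s => ξ s k) t)
          = -(K L1 * ((k : ℂ) * ((k : ℂ) + 1) * B (k - 1) * K (E (k + 1))))
            - K L2 * ((k : ℂ) * ((k : ℂ) + 1) * B (k - 1) * K (E (k + 2))) := by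
        intro k hk
        simp only [Finset.mem_Icc] at hk
        have hcoef : (if k = 1 then (1 : ℂ) else c t (k - 1)) = B (k - 1) := by
          rcases eq_or_ne k 1 with h | h
          · simp [h, hB, bb]
          · simp [h, hB, bb, show k - 1 ≠ 0 by omega]
        rw [hcoef, hDξ k (by omega) (by omega)]
        simp only [map_sub, map_mul, map_neg, map_add, map_natCast, map_one]
        ring
      rw [Finset.sum_congr rfl key, Finset.sum_sub_distrib, Finset.sum_neg_distrib,
        ← Finset.mul_sum, ← Finset.mul_sum]
    rw [hA, hBpart]
    -- reindex the two shifted sums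
    have hSB : (∑ k ∈ Finset.Icc 1 n, (k : ℂ) * ((k : ℂ) + 1) * B (k - 1) * K (E (k + 1)))
        = ∑ k ∈ Finset.Icc 2 n, (k : ℂ) * ((k : ℂ) - 1) * B (k - 2) * K (ξ t k) :=
      calc (∑ k ∈ Finset.Icc 1 n, (k : ℂ) * ((k : ℂ) + 1) * B (k - 1) * K (E (k + 1)))
          = ∑ k ∈ Finset.Icc 1 n,
              ((k + 1 : ℕ) : ℂ) * (((k + 1 : ℕ) : ℂ) - 1) * B (k + 1 - 2) * K (E (k + 1)) := by
            refine Finset.sum_congr rfl fun k _ => ?_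
            rw [show k + 1 - 2 = k - 1 from by omega]
            push_cast; ring
        _ = ∑ j ∈ Finset.Icc 2 n, (j : ℂ) * ((j : ℂ) - 1) * B (j - 2) * K (E j) :=
            sum_shift_strip1 n 1 (by omega)
              (fun j : ℕ => (j : ℂ) * ((j : ℂ) - 1) * B (j - 2) * K (E j))
              (by simp [hEzero (n + 1) (by omega)])
        _ = ∑ k ∈ Finset.Icc 2 n, (k : ℂ) * ((k : ℂ) - 1) * B (k - 2) * K (ξ t k) := by
            refine Finset.sum_congr rfl fun j hj => ?_
            simp only [Finset.mem_Icc] at hj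
            rw [hEval j (by omega)]
    have hSD : (∑ k ∈ Finset.Icc 1 n, (k : ℂ) * ((k : ℂ) + 1) * B (k - 1) * K (E (k + 2)))
        = ∑ k ∈ Finset.Icc 3 n, ((k : ℂ) - 1) * ((k : ℂ) - 2) * B (k - 3) * K (ξ t k) :=
      calc (∑ k ∈ Finset.Icc 1 n, (k : ℂ) * ((k : ℂ) + 1) * B (k - 1) * K (E (k + 2)))
          = ∑ k ∈ Finset.Icc 1 n, (((k + 2 : ℕ) : ℂ) - 1) * (((k + 2 : ℕ) : ℂ) - 2)
              * B (k + 2 - 3) * K (E (k + 2)) := by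
            refine Finset.sum_congr rfl fun k _ => ?_
            rw [show k + 2 - 3 = k - 1 from by omega]
            push_cast; ring
        _ = ∑ j ∈ Finset.Icc 3 n, ((j : ℂ) - 1) * ((j : ℂ) - 2) * B (j - 3) * K (E j) :=
            sum_shift_strip2 n 1 (by omega)
              (fun j : ℕ => ((j : ℂ) - 1) * ((j : ℂ) - 2) * B (j - 3) * K (E j))
              (by simp [hEzero (n + 1) (by omega)]) (by simp [hEzero (n + 2) (by omega)])
        _ = ∑ k ∈ Finset.Icc 3 n, ((k : ℂ) - 1) * ((k : ℂ) - 2) * B (k - 3) * K (ξ t k) := by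
            refine Finset.sum_congr rfl fun j hj => ?_
            simp only [Finset.mem_Icc] at hj
            rw [hEval j (by omega)]
    have hQ : (∑ k ∈ Finset.Icc 2 n, (k : ℂ) * ((k : ℂ) - 2) * B (k - 3) * K (ξ t k))
        = ∑ k ∈ Finset.Icc 3 n, (k : ℂ) * ((k : ℂ) - 2) * B (k - 3) * K (ξ t k) := by
      rw [sum_bot _ 2 n (by omega)]
      norm_num
    have hfinal : (∑ k ∈ Finset.Icc 3 n, (k : ℂ) * ((k : ℂ) - 2) * B (k - 3) * K (ξ t k))
        - (∑ k ∈ Finset.Icc 3 n, ((k : ℂ) - 1) * ((k : ℂ) - 2) * B (k - 3) * K (ξ t k))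
        = L3 := by
      rw [← Finset.sum_sub_distrib, hL3, lThree_eq]
      refine Finset.sum_congr rfl fun k _ => ?_
      ring
    rw [hSB, hSD, hQ]
    linear_combination K L2 * hfinal
  ---------------------------------------------------------------------------
  -- part 2 : derivative of l₂
  ---------------------------------------------------------------------------
  have goal2 : deriv (lTwo n c ξ) t = -K L1 * L3 := by
    rw [deriv_lTwo n c ξ hc hξ t, Finset.sum_add_distrib]
    have hA : (∑ k ∈ Finset.Icc 2 n,
        ((k : ℂ) - 1) * (if k = 2 then 0 else deriv (fun s => c s (k - 2)) t) * K (ξ t k))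
        = K L1 * (∑ k ∈ Finset.Icc 3 n, ((k : ℂ) - 1) * ((k : ℂ) - 2) * B (k - 3) * K (ξ t k))
          + K L2 * (∑ k ∈ Finset.Icc 3 n,
              ((k : ℂ) - 1) * ((k : ℂ) - 3) * B (k - 4) * K (ξ t k)) := by
      rw [sum_bot _ 2 n (by omega)]
      have h1t : (((2 : ℕ) : ℂ) - 1) * (if (2 : ℕ) = 2 then 0 else deriv (fun s => c s (2 - 2)) t)
          * K (ξ t 2) = 0 := by simp
      rw [h1t, zero_add]
      rw [show (2 : ℕ) + 1 = 3 from rfl]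
      have key : ∀ k ∈ Finset.Icc 3 n,
          ((k : ℂ) - 1) * (if k = 2 then 0 else deriv (fun s => c s (k - 2)) t) * K (ξ t k)
          = K L1 * (((k : ℂ) - 1) * ((k : ℂ) - 2) * B (k - 3) * K (ξ t k))
            + K L2 * (((k : ℂ) - 1) * ((k : ℂ) - 3) * B (k - 4) * K (ξ t k)) := by
        intro k hk
        simp only [Finset.mem_Icc] at hk
        rw [if_neg (by omega), hDc (k - 2) (by omega) (by omega)]
        have ec : ((k - 2 : ℕ) : ℂ) = (k : ℂ) - 2 := by
          rw [Nat.cast_sub (by omega)]; norm_num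
        have i1 : k - 2 - 1 = k - 3 := by omega
        have i2 : k - 2 - 2 = k - 4 := by omega
        rw [ec, i1, i2]
        ring
      rw [Finset.sum_congr rfl key, Finset.sum_add_distrib, ← Finset.mul_sum, ← Finset.mul_sum]
    have hBpart : (∑ k ∈ Finset.Icc 2 n,
        ((k : ℂ) - 1) * (if k = 2 then 1 else c t (k - 2)) * K (deriv (fun s => ξ s k) t))
        = -(K L1 * (∑ k ∈ Finset.Icc 2 n,
              ((k : ℂ) - 1) * ((k : ℂ) + 1) * B (k - 2) * K (E (k + 1))))
          - K L2 * (∑ k ∈ Finset.Icc 2 n,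
              ((k : ℂ) - 1) * ((k : ℂ) + 1) * B (k - 2) * K (E (k + 2))) := by
      have key : ∀ k ∈ Finset.Icc 2 n,
          ((k : ℂ) - 1) * (if k = 2 then 1 else c t (k - 2)) * K (deriv (fun s => ξ s k) t)
          = -(K L1 * (((k : ℂ) - 1) * ((k : ℂ) + 1) * B (k - 2) * K (E (k + 1))))
            - K L2 * (((k : ℂ) - 1) * ((k : ℂ) + 1) * B (k - 2) * K (E (k + 2))) := by
        intro k hk
        simp only [Finset.mem_Icc] at hk
        have hcoef : (if k = 2 then (1 : ℂ) else c t (k - 2)) = B (k - 2) := by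
          rcases eq_or_ne k 2 with h | h
          · simp [h, hB, bb]
          · simp [h, hB, bb, show k - 2 ≠ 0 by omega]
        rw [hcoef, hDξ k (by omega) (by omega)]
        simp only [map_sub, map_mul, map_neg, map_add, map_natCast, map_one]
        ring
      rw [Finset.sum_congr rfl key, Finset.sum_sub_distrib, Finset.sum_neg_distrib,
        ← Finset.mul_sum, ← Finset.mul_sum]
    rw [hA, hBpart]
    have hSB : (∑ k ∈ Finset.Icc 2 n, ((k : ℂ) - 1) * ((k : ℂ) + 1) * B (k - 2) * K (E (k + 1)))
        = ∑ k ∈ Finset.Icc 3 n, (k : ℂ) * ((k : ℂ) - 2) * B (k - 3) * K (ξ t k) :=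
      calc (∑ k ∈ Finset.Icc 2 n, ((k : ℂ) - 1) * ((k : ℂ) + 1) * B (k - 2) * K (E (k + 1)))
          = ∑ k ∈ Finset.Icc 2 n,
              ((k + 1 : ℕ) : ℂ) * (((k + 1 : ℕ) : ℂ) - 2) * B (k + 1 - 3) * K (E (k + 1)) := by
            refine Finset.sum_congr rfl fun k _ => ?_
            rw [show k + 1 - 3 = k - 2 from by omega]
            push_cast; ring
        _ = ∑ j ∈ Finset.Icc 3 n, (j : ℂ) * ((j : ℂ) - 2) * B (j - 3) * K (E j) :=
            sum_shift_strip1 n 2 (by omega)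
              (fun j : ℕ => (j : ℂ) * ((j : ℂ) - 2) * B (j - 3) * K (E j))
              (by simp [hEzero (n + 1) (by omega)])
        _ = ∑ k ∈ Finset.Icc 3 n, (k : ℂ) * ((k : ℂ) - 2) * B (k - 3) * K (ξ t k) := by
            refine Finset.sum_congr rfl fun j hj => ?_
            simp only [Finset.mem_Icc] at hj
            rw [hEval j (by omega)]
    have hSD : (∑ k ∈ Finset.Icc 2 n, ((k : ℂ) - 1) * ((k : ℂ) + 1) * B (k - 2) * K (E (k + 2)))
        = ∑ k ∈ Finset.Icc 4 n, ((k : ℂ) - 1) * ((k : ℂ) - 3) * B (k - 4) * K (ξ t k) :=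
      calc (∑ k ∈ Finset.Icc 2 n, ((k : ℂ) - 1) * ((k : ℂ) + 1) * B (k - 2) * K (E (k + 2)))
          = ∑ k ∈ Finset.Icc 2 n, (((k + 2 : ℕ) : ℂ) - 1) * (((k + 2 : ℕ) : ℂ) - 3)
              * B (k + 2 - 4) * K (E (k + 2)) := by
            refine Finset.sum_congr rfl fun k _ => ?_
            rw [show k + 2 - 4 = k - 2 from by omega]
            push_cast; ring
        _ = ∑ j ∈ Finset.Icc 4 n, ((j : ℂ) - 1) * ((j : ℂ) - 3) * B (j - 4) * K (E j) :=
            sum_shift_strip2 n 2 (by omega)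
              (fun j : ℕ => ((j : ℂ) - 1) * ((j : ℂ) - 3) * B (j - 4) * K (E j))
              (by simp [hEzero (n + 1) (by omega)]) (by simp [hEzero (n + 2) (by omega)])
        _ = ∑ k ∈ Finset.Icc 4 n, ((k : ℂ) - 1) * ((k : ℂ) - 3) * B (k - 4) * K (ξ t k) := by
            refine Finset.sum_congr rfl fun j hj => ?_
            simp only [Finset.mem_Icc] at hj
            rw [hEval j (by omega)]
    have hQ : (∑ k ∈ Finset.Icc 3 n, ((k : ℂ) - 1) * ((k : ℂ) - 3) * B (k - 4) * K (ξ t k))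
        = ∑ k ∈ Finset.Icc 4 n, ((k : ℂ) - 1) * ((k : ℂ) - 3) * B (k - 4) * K (ξ t k) := by
      rw [sum_bot _ 3 n (by omega)]
      norm_num
    have hfinal : (∑ k ∈ Finset.Icc 3 n, ((k : ℂ) - 1) * ((k : ℂ) - 2) * B (k - 3) * K (ξ t k))
        - (∑ k ∈ Finset.Icc 3 n, (k : ℂ) * ((k : ℂ) - 2) * B (k - 3) * K (ξ t k))
        = -L3 := by
      rw [← Finset.sum_sub_distrib, hL3, lThree_eq, ← Finset.sum_neg_distrib]
      refine Finset.sum_congr rfl fun k _ => ?_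
      ring
    rw [hSB, hSD, hQ]
    linear_combination K L1 * hfinal
  exact ⟨goal1, goal2⟩
end
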